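/- For all real k ≥ 1 and all n ≥ 0, C_{k,n} = ((β−3)/(β−α))·α^n + ((3−α)/(β−α))·β^n, where α = (3k + √(9k²−4k+4))/2 and β = (3k − √(9k²−4k+4))/2. -/
import Mathlib


def C (k : ℝ) : ℕ → ℝ
  | 0 => 1
  | 1 => 3
  | (n+2) => 3*k * C k (n+1) + (1-k) * C k n

theorem stmt4 (k : ℝ) (hk : 1 ≤ k) (n : ℕ) :
    C k n = ((((3*k - Real.sqrt (9*k^2 - 4*k + 4))/2) - 3) /
        (((3*k - Real.sqrt (9*k^2 - 4*k + 4))/2) - ((3*k + Real.sqrt (9*k^2 - 4*k + 4))/2))) *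
        ((3*k + Real.sqrt (9*k^2 - 4*k + 4))/2) ^ n +
      ((3 - ((3*k + Real.sqrt (9*k^2 - 4*k + 4))/2)) /
        (((3*k - Real.sqrt (9*k^2 - 4*k + 4))/2) - ((3*k + Real.sqrt (9*k^2 - 4*k + 4))/2))) *
        ((3*k - Real.sqrt (9*k^2 - 4*k + 4))/2) ^ n := by
  set s := Real.sqrt (9*k^2 - 4*k + 4) with hsdef
  have hD : (0:ℝ) < 9*k^2 - 4*k + 4 := by nlinarith
  have hs2 : s^2 = 9*k^2 - 4*k + 4 := Real.sq_sqrt hD.le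
  have hs : 0 < s := Real.sqrt_pos.mpr hD
  have hsne : s ≠ 0 := hs.ne'
  have ha : ((3*k+s)/2)^2 = 3*k*((3*k+s)/2) + (1-k) := by linear_combination hs2/4
  have hb : ((3*k-s)/2)^2 = 3*k*((3*k-s)/2) + (1-k) := by linear_combination hs2/4
  induction n using Nat.twoStepInduction with
  | zero => show (1:ℝ) = _ ; field_simp; ring_nf; simp [mul_inv_cancel₀ hsne]
  | one => show (3:ℝ) = _ ; field_simp; ring_nf; simp [mul_inv_cancel₀ hsne]
  | more n ih1 ih2 =>
    show 3*k * C k (n+1) + (1-k) * C k n = _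
    rw [ih2, ih1]
    have e1 : ((3*k+s)/2) ^ (n+2) = ((3*k+s)/2) ^ n * ((3*k+s)/2)^2 := by ring
    have e2 : ((3*k-s)/2) ^ (n+2) = ((3*k-s)/2) ^ n * ((3*k-s)/2)^2 := by ring
    rw [e1, e2, ha, hb]
    ring
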